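/- Let H = [I_{n−k}, A | B, C] ∈ F2^{(n−k)×2n} be a check matrix in standard form, where A, C ∈ F2^{(n−k)×k} and B ∈ F2^{(n−k)×(n−k)}, and suppose H Λ Hᵀ = 0. Define the (n+k)×2n block matrix G = [[I_{n−k}, A, B, C], [0, I_k, Cᵀ, 0], [0, 0, Aᵀ, I_k]]. Then G Λ Hᵀ = 0, G has full row rank n + k, and consequently the row space of G equals the symplectic dual {v ∈ F2^{2n} : v Λ Hᵀ = 0} of the row space of H. -/

import Mathlib

open Matrix

abbrev F2 := ZMod 2

/-- Qubit coordinates split as the first `n - k` and the last `k`. -/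
abbrev Idx (n k : ℕ) := Fin (n - k) ⊕ Fin k

/-- The symplectic form matrix `Λ = [[0, I],[I, 0]]` on `F₂^{2n}`, with the `X`-part
(first `n` coordinates) and `Z`-part (last `n` coordinates) indexed by `Idx n k`. -/
def Lam (n k : ℕ) : Matrix (Idx n k ⊕ Idx n k) (Idx n k ⊕ Idx n k) F2 :=
  Matrix.fromBlocks 0 1 1 0

/-!
The identity `G Λ Hᵀ = 0` is a block computation in which `H Λ Hᵀ = 0` takes care of the first
block row, and the other two vanish because `Cᵀ + Cᵀ = Aᵀ + Aᵀ = 0` in characteristic two.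
Both `G` and `H` have explicit right inverses, so they have full row rank `n + k` and `n - k`.
Since `Λ` is nondegenerate, the dual of `Row(H)` has dimension `2n - (n - k) = n + k`, and it
contains `Row(G)`, which has the same dimension.
-/

namespace Matrix

variable {K : Type*} [Field K] {m p ι : Type*} [Fintype ι]

theorem rank_eq_card_of_mul_eq_one [Fintype p] [DecidableEq p] {G : Matrix p ι K}
    {P : Matrix ι p K} (h : G * P = 1) : G.rank = Fintype.card p := by
  refine le_antisymm (rank_le_card_height G) ?_
  simpa [h, rank_one] using rank_mul_le_left G P

theorem forall_mem_span_range_dotProduct_mulVec_eq_zero_iff (H : Matrix m ι K)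
    (L : Matrix ι ι K) (v : ι → K) :
    (∀ c ∈ Submodule.span K (Set.range H), v ⬝ᵥ (L *ᵥ c) = 0) ↔ (H * Lᵀ) *ᵥ v = 0 := by
  classical
  let f := dotProductEquiv K ι (v ᵥ* L)
  calc (∀ c ∈ Submodule.span K (Set.range H), v ⬝ᵥ (L *ᵥ c) = 0)
      ↔ Submodule.span K (Set.range H) ≤ LinearMap.ker f := by
        simp [f, SetLike.le_def, dotProduct_mulVec]
    _ ↔ ∀ j, f (H j) = 0 := by
        rw [Submodule.span_le]; exact Set.forall_mem_range
    _ ↔ (H * Lᵀ) *ᵥ v = 0 := by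
        simp [f, ← mulVec_mulVec, mulVec_transpose, funext_iff, mulVec, dotProduct_comm]

theorem span_range_eq_ker_mulVecLin [Finite p] {G : Matrix p ι K} {N : Matrix m ι K}
    (hNG : N * Gᵀ = 0) (hrank : G.rank + N.rank = Fintype.card ι) :
    Submodule.span K (Set.range G) = LinearMap.ker N.mulVecLin := by
  refine Submodule.eq_of_le_of_finrank_eq ?_ ?_
  · rw [Submodule.span_le]
    rintro _ ⟨i, rfl⟩
    ext j
    exact congr_fun (congr_fun hNG j) i
  · have hG : G.rank = Module.finrank K (Submodule.span K (Set.range G)) :=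
      G.rank_eq_finrank_span_row
    have hN : N.rank = Module.finrank K (LinearMap.range N.mulVecLin) := rfl
    have := LinearMap.finrank_range_add_finrank_ker N.mulVecLin
    rw [Module.finrank_fintype_fun_eq_card] at this
    omega

theorem span_range_eq_dual_of_mul_mul_transpose_eq_zero [Finite p] [DecidableEq ι]
    {G : Matrix p ι K} {H : Matrix m ι K} {L : Matrix ι ι K} (hGH : G * L * Hᵀ = 0)
    (hL : IsUnit L.det) (hrank : G.rank + H.rank = Fintype.card ι) :
    (Submodule.span K (Set.range G) : Set (ι → K)) =
      {v | ∀ c ∈ Submodule.span K (Set.range H), v ⬝ᵥ (L *ᵥ c) = 0} := by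
  have hHG : H * Lᵀ * Gᵀ = 0 := by
    simpa [transpose_mul, Matrix.mul_assoc] using congr_arg transpose hGH
  have hrankHL : (H * Lᵀ).rank = H.rank :=
    rank_mul_eq_left_of_isUnit_det Lᵀ H (by rwa [det_transpose])
  ext v
  rw [SetLike.mem_coe, span_range_eq_ker_mulVecLin hHG (hrankHL ▸ hrank)]
  exact (forall_mem_span_range_dotProduct_mulVec_eq_zero_iff H L v).symm

end Matrix

def symplecticForm (ι R : Type*) [DecidableEq ι] [Zero R] [One R] : Matrix (ι ⊕ ι) (ι ⊕ ι) R :=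
  fromBlocks 0 1 1 0

theorem symplecticForm_mul_self (ι R : Type*) [Fintype ι] [DecidableEq ι] [Semiring R] :
    symplecticForm ι R * symplecticForm ι R = 1 := by
  simp [symplecticForm, fromBlocks_multiply]

section StandardForm

variable {R : Type*} [CommRing R] {r s : Type*} [Fintype r] [Fintype s] [DecidableEq r]

def standardCheck (A : Matrix r s R) (B : Matrix r r R) (C : Matrix r s R) :
    Matrix r ((r ⊕ s) ⊕ (r ⊕ s)) R :=
  fromCols (fromCols 1 A) (fromCols B C)

def standardGenerator [DecidableEq s] (A : Matrix r s R) (B : Matrix r r R) (C : Matrix r s R) :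
    Matrix (r ⊕ (s ⊕ s)) ((r ⊕ s) ⊕ (r ⊕ s)) R :=
  fromRows (standardCheck A B C)
    (fromRows (fromCols (fromCols 0 1) (fromCols Cᵀ 0)) (fromCols (fromCols 0 0) (fromCols Aᵀ 1)))

theorem symplecticForm_mul_standardCheck_transpose [DecidableEq s] (A : Matrix r s R)
    (B : Matrix r r R) (C : Matrix r s R) :
    symplecticForm (r ⊕ s) R * (standardCheck A B C)ᵀ =
      fromRows (fromRows Bᵀ Cᵀ) (fromRows 1 Aᵀ) := by
  simp [symplecticForm, standardCheck, transpose_fromCols, fromBlocks_mul_fromRows]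

theorem standardGenerator_mul_symplecticForm_mul_standardCheck_transpose [DecidableEq s]
    [CharP R 2] (A : Matrix r s R) (B : Matrix r r R) (C : Matrix r s R)
    (hH : standardCheck A B C * symplecticForm (r ⊕ s) R * (standardCheck A B C)ᵀ = 0) :
    standardGenerator A B C * symplecticForm (r ⊕ s) R * (standardCheck A B C)ᵀ = 0 := by
  rw [standardGenerator, Matrix.mul_assoc, fromRows_mul, fromRows_mul, ← Matrix.mul_assoc, hH,
    symplecticForm_mul_standardCheck_transpose]
  simp [fromCols_mul_fromRows, ← two_smul R, CharTwo.two_eq_zero]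

variable {K : Type*} [Field K]

theorem rank_standardCheck (A : Matrix r s K) (B : Matrix r r K) (C : Matrix r s K) :
    (standardCheck A B C).rank = Fintype.card r :=
  rank_eq_card_of_mul_eq_one (P := fromRows (fromRows 1 0) 0) <| by
    simp [standardCheck, fromCols_mul_fromRows]

theorem rank_standardGenerator [DecidableEq s] [CharP K 2] (A : Matrix r s K) (B : Matrix r r K)
    (C : Matrix r s K) :
    (standardGenerator A B C).rank = Fintype.card r + (Fintype.card s + Fintype.card s) := by
  rw [rank_eq_card_of_mul_eq_one (P := fromRows
      (fromRows (fromCols 1 (fromCols A C)) (fromCols 0 (fromCols 1 0)))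
      (fromRows 0 (fromCols 0 (fromCols 0 1))))]
  · simp
  simp only [standardGenerator, standardCheck, fromRows_mul, fromCols_mul_fromRows, mul_fromCols,
    Matrix.zero_mul, Matrix.one_mul, Matrix.mul_one, Matrix.mul_zero, zero_add, add_zero,
    fromCols_zero]
  ext (i | i | i) (j | j | j) <;> simp [one_apply, CharTwo.add_self_eq_zero]

end StandardForm

theorem statement9 (n k : ℕ) (hk : k < n)
    (A C : Matrix (Fin (n - k)) (Fin k) F2)
    (B : Matrix (Fin (n - k)) (Fin (n - k)) F2)
    (H : Matrix (Fin (n - k)) (Idx n k ⊕ Idx n k) F2)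
    (hHdef : H = Matrix.fromCols (Matrix.fromCols 1 A) (Matrix.fromCols B C))
    (hH : H * Lam n k * H.transpose = 0)
    (G : Matrix (Fin (n - k) ⊕ (Fin k ⊕ Fin k)) (Idx n k ⊕ Idx n k) F2)
    (hGdef : G = Matrix.fromRows H
      (Matrix.fromRows
        (Matrix.fromCols (Matrix.fromCols 0 1) (Matrix.fromCols C.transpose 0))
        (Matrix.fromCols (Matrix.fromCols 0 0) (Matrix.fromCols A.transpose 1)))) :
    G * Lam n k * H.transpose = 0 ∧
    G.rank = n + k ∧
    (Submodule.span F2 (Set.range G) : Set ((Idx n k ⊕ Idx n k) → F2))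
      = {v : (Idx n k ⊕ Idx n k) → F2 |
          ∀ c ∈ Submodule.span F2 (Set.range H), v ⬝ᵥ (Lam n k *ᵥ c) = 0} := by
  obtain rfl : H = standardCheck A B C := hHdef
  obtain rfl : G = standardGenerator A B C := hGdef
  have hGH : standardGenerator A B C * Lam n k * (standardCheck A B C)ᵀ = 0 :=
    standardGenerator_mul_symplecticForm_mul_standardCheck_transpose A B C hH
  have hrank : (standardGenerator A B C).rank = n + k := by
    rw [rank_standardGenerator]
    simp only [Fintype.card_fin]
    omega
  have hLam : IsUnit (Lam n k).det :=
    isUnit_det_of_left_inverse (symplecticForm_mul_self (Idx n k) F2)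
  refine ⟨hGH, hrank, span_range_eq_dual_of_mul_mul_transpose_eq_zero hGH hLam ?_⟩
  rw [hrank, rank_standardCheck]
  simp only [Fintype.card_sum, Fintype.card_fin]
  omega
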